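/- arXiv:1501.01429 — 3 statements merged into one kernel-verified Lean document; each statement's English description precedes it below -/
import Mathlib

section
/- Let w be a word and 𝒫 a Parikh vector. Then at most one abelian run of period 𝒫 starts at each position of w: if (b,h₁,t₁,e₁) and (b,h₂,t₂,e₂) are both abelian runs of period 𝒫 in w (starting at the same position b), then e₁ = e₂. -/
/-- The Parikh vector of a word `v`: the number of occurrences of each letter. -/
def parikh {α : Type*} [DecidableEq α] (v : List α) : α → ℕ := fun a => v.count a

/-- The norm of a Parikh vector: the sum of its components. -/
def pnorm {α : Type*} [Fintype α] (P : α → ℕ) : ℕ := ∑ a, P a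

/-- Non-strict containment of Parikh vectors: `P ⊆ Q`. -/
def PLe {α : Type*} (P Q : α → ℕ) : Prop := ∀ a, P a ≤ Q a

/-- Strict containment of Parikh vectors: `P ⊂ Q`, i.e. componentwise `≤` and smaller norm. -/
def PLt {α : Type*} [Fintype α] (P Q : α → ℕ) : Prop :=
  (∀ a, P a ≤ Q a) ∧ pnorm P < pnorm Q

/-- The substring `w[i..j]` of `w`, from position `i` to position `j`, both included. -/
def substr {α : Type*} (w : List α) (i j : ℕ) : List α := (w.drop i).take (j + 1 - i)

/-- `(b,h,t,e)` is an occurrence of a substring of `w` with abelian period `P`: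
`w[b..e] = u₀u₁⋯u_{k-1}u_k` for some `k ≥ 2`, with `|u₀| = h`, `|u_k| = t`,
`𝒫_{u_1} = ⋯ = 𝒫_{u_{k-1}} = P`, `𝒫_{u₀} ⊂ P` and `𝒫_{u_k} ⊂ P`. -/
def IsOcc {α : Type*} [Fintype α] [DecidableEq α]
    (w : List α) (P : α → ℕ) (b h t e : ℕ) : Prop :=
  b ≤ e ∧ e < w.length ∧
  ∃ (u0 uk : List α) (us : List (List α)),
    substr w b e = u0 ++ us.flatten ++ uk ∧
    u0.length = h ∧ uk.length = t ∧
    1 ≤ us.length ∧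
    (∀ u ∈ us, parikh u = P) ∧
    PLt (parikh u0) P ∧ PLt (parikh uk) P

/-- An occurrence `(b,h,t,e)` with abelian period `P` is left-maximal if there is no
occurrence `(b-1,h',t',e)` with the same abelian period `P`. -/
def LeftMaximal {α : Type*} [Fintype α] [DecidableEq α]
    (w : List α) (P : α → ℕ) (b h t e : ℕ) : Prop :=
  IsOcc w P b h t e ∧ ∀ b' h' t', b' + 1 = b → ¬ IsOcc w P b' h' t' e

/-- An occurrence `(b,h,t,e)` with abelian period `P` is right-maximal if there is no
occurrence `(b,h',t',e+1)` with the same abelian period `P`. -/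
def RightMaximal {α : Type*} [Fintype α] [DecidableEq α]
    (w : List α) (P : α → ℕ) (b h t e : ℕ) : Prop :=
  IsOcc w P b h t e ∧ ∀ h' t', ¬ IsOcc w P b h' t' (e + 1)

/-- An abelian run of period `P` is a maximal occurrence `(b,h,t,e)` with abelian period `P`
such that `e - b - h - t + 1 ≥ 2|P|`. -/
def IsAbelianRun {α : Type*} [Fintype α] [DecidableEq α]
    (w : List α) (P : α → ℕ) (b h t e : ℕ) : Prop :=
  LeftMaximal w P b h t e ∧ RightMaximal w P b h t e ∧
  b + h + t + 2 * pnorm P ≤ e + 1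

/-!
If a run `(b, h₁, t₁, e₁)` ended strictly before another occurrence `(b, h₂, t₂, e₂)` with the same
start, cutting the second occurrence at position `e₁ + 1` would still leave its head, at least one
full block (the run is longer than `2|P|` while the head is shorter than `|P|`), and a proper prefix
of a block or of the tail as new tail. That is an occurrence ending at `e₁ + 1`, contradicting the
right-maximality of the run.
-/

lemma pnorm_parikh {α : Type*} [Fintype α] [DecidableEq α] (v : List α) :
    pnorm (parikh v) = v.length := by
  simpa [pnorm, parikh] using Multiset.sum_count_eq_card (s := Finset.univ) (m := (v : Multiset α))
    (fun a _ => Finset.mem_univ a)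

lemma List.Sublist.pLe_parikh {α : Type*} [DecidableEq α] {v v' : List α} (h : v.Sublist v') :
    PLe (parikh v) (parikh v') :=
  fun a => h.count_le a

lemma pLt_parikh_take {α : Type*} [Fintype α] [DecidableEq α] {P : α → ℕ} {v : List α}
    (hv : PLe (parikh v) P) {n : ℕ} (hn : (v.take n).length < pnorm P) :
    PLt (parikh (v.take n)) P :=
  ⟨fun a => ((v.take_sublist n).pLe_parikh a).trans (hv a), by rwa [pnorm_parikh]⟩

/-- The words `u₁ ⋯ u_{k-1} u_k` with `𝒫_{u_i} = P` for `i < k` and `𝒫_{u_k} ⊂ P`, i.e. occurrences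
with abelian period `P` and empty head, where `k = 1` is allowed. -/
def IsBlocksWithTail {α : Type*} [Fintype α] [DecidableEq α] (P : α → ℕ) (x : List α) : Prop :=
  ∃ (us : List (List α)) (v : List α),
    x = us.flatten ++ v ∧ (∀ u ∈ us, parikh u = P) ∧ PLt (parikh v) P

namespace IsBlocksWithTail

variable {α : Type*} [Fintype α] [DecidableEq α] {P : α → ℕ}

lemma take {x : List α} (hx : IsBlocksWithTail P x) (n : ℕ) :
    IsBlocksWithTail P (x.take n) := by
  obtain ⟨us, v, rfl, hus, hv⟩ := hx
  induction us generalizing n with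
  | nil =>
    have hv_len := hv.2
    rw [pnorm_parikh] at hv_len
    exact ⟨[], v.take n, by simp, by simp, pLt_parikh_take hv.1 (by simp; omega)⟩
  | cons u rest ih =>
    have hu : parikh u = P := hus u List.mem_cons_self
    have hu_len : u.length = pnorm P := by rw [← pnorm_parikh, hu]
    rw [List.flatten_cons, List.append_assoc, List.take_append]
    rcases lt_or_ge n u.length with hn | hn
    · refine ⟨[], u.take n, by simp [hn.le], by simp,
        pLt_parikh_take (hu ▸ fun _ => le_rfl) (by simp; omega)⟩
    · obtain ⟨us', v', hx', hus', hv'⟩ :=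
        ih (n - u.length) (fun u' hu' => hus u' (List.mem_cons_of_mem u hu'))
      refine ⟨u :: us', v', ?_, ?_, hv'⟩
      · rw [List.take_of_length_le hn, hx', List.flatten_cons, List.append_assoc]
      · rintro u' (_ | ⟨_, hu'⟩)
        exacts [hu, hus' u' hu']

lemma exists_nonempty_blocks {x : List α} (hx : IsBlocksWithTail P x)
    (hlen : pnorm P ≤ x.length) :
    ∃ (us : List (List α)) (v : List α),
      x = us.flatten ++ v ∧ 1 ≤ us.length ∧ (∀ u ∈ us, parikh u = P) ∧ PLt (parikh v) P := by
  obtain ⟨us, v, rfl, hus, hv⟩ := hx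
  refine ⟨us, v, rfl, ?_, hus, hv⟩
  rcases us with _ | ⟨u, us⟩
  · have := hv.2
    rw [pnorm_parikh] at this
    simp at hlen
    omega
  · simp

end IsBlocksWithTail

lemma substr_take {α : Type*} (w : List α) {b e e' : ℕ} (he : e' ≤ e) :
    (substr w b e).take (e' + 1 - b) = substr w b e' := by
  simp only [substr, List.take_take]
  congr 1
  omega

lemma IsOcc.truncate {α : Type*} [Fintype α] [DecidableEq α] {w : List α} {P : α → ℕ}
    {b h t e e' : ℕ} (hocc : IsOcc w P b h t e) (he : e' ≤ e) (hlen : b + h + pnorm P ≤ e' + 1) :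
    ∃ t', IsOcc w P b h t' e' := by
  obtain ⟨-, he_lt, u0, uk, us, heq, rfl, rfl, -, hus, hu0, huk⟩ := hocc
  set x := (us.flatten ++ uk).take (e' + 1 - b - u0.length)
  have hx : IsBlocksWithTail P x := IsBlocksWithTail.take ⟨us, uk, rfl, hus, huk⟩ _
  have hsub : substr w b e' = u0 ++ x := by
    rw [← substr_take w he, heq, List.append_assoc, List.take_append,
      List.take_of_length_le (by omega)]
  have hx_len : pnorm P ≤ x.length := by
    have := congrArg List.length hsub
    simp only [substr, List.length_take, List.length_drop, List.length_append] at this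
    omega
  obtain ⟨us', v, hx_eq, hus'_len, hus', hv⟩ := hx.exists_nonempty_blocks hx_len
  have hP_pos : 0 < pnorm P := (Nat.zero_le _).trans_lt hu0.2
  exact ⟨v.length, by omega, by omega, u0, v, us', by rw [hsub, hx_eq, List.append_assoc], rfl,
    rfl, hus'_len, hus', hu0, hv⟩

lemma IsAbelianRun.le_of_isOcc {α : Type*} [Fintype α] [DecidableEq α] {w : List α}
    {P : α → ℕ} {b h t e h' t' e' : ℕ} (hrun : IsAbelianRun w P b h t e)
    (hocc : IsOcc w P b h' t' e') : e' ≤ e := by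
  obtain ⟨-, ⟨-, hmax⟩, hlen⟩ := hrun
  by_contra! hlt
  have hh' : h' < pnorm P := by
    obtain ⟨-, -, u0, -, -, -, rfl, -, -, -, hu0, -⟩ := hocc
    simpa [pnorm_parikh] using hu0.2
  obtain ⟨t'', hocc'⟩ := hocc.truncate (e' := e + 1) hlt (by omega)
  exact hmax h' t'' hocc'

/-- At most one abelian run of period `P` starts at each position of `w`. -/
theorem abelian_runs_same_start {α : Type*} [Fintype α] [DecidableEq α]
    (w : List α) (P : α → ℕ) (b h₁ t₁ e₁ h₂ t₂ e₂ : ℕ)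
    (hr₁ : IsAbelianRun w P b h₁ t₁ e₁) (hr₂ : IsAbelianRun w P b h₂ t₂ e₂) :
    e₁ = e₂ :=
  le_antisymm (hr₂.le_of_isOcc hr₁.1.1) (hr₁.le_of_isOcc hr₂.1.1)
end

section
/- Let w be a word and 𝒫 a Parikh vector. If (b₁,h₁,0,e₁) and (b₂,h₂,0,e₂) are two left-maximal occurrences with the same abelian period 𝒫 in w (both with empty tail) such that e₁ < e₂, b₁ > e₁ − 2|𝒫| + 1 and b₂ > e₂ − 2|𝒫| + 1, then b₁ ≤ b₂. -/
/-- structure of a short occurrence with empty tail -/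
lemma occ_short {α : Type*} [Fintype α] [DecidableEq α] {w : List α} {P : α → ℕ} {b h e : ℕ}
    (hocc : IsOcc w P b h 0 e) (hshort : e + 1 < b + 2 * pnorm P) :
    0 < pnorm P ∧ h < pnorm P ∧ e + 1 = b + h + pnorm P ∧
    parikh ((w.drop (b + h)).take (pnorm P)) = P ∧
    (∀ a, ((w.drop b).take h).count a ≤ P a) := by
  obtain ⟨hbe, hew, u0, uk, us, hsub, hu0, huk, hus, husP, h0lt, hklt⟩ := hocc
  set p := pnorm P with hp
  have hknil : uk = [] := List.length_eq_zero_iff.mp huk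
  have hppos : 0 < p := by
    have := hklt.2
    simpa [hknil, pnorm_parikh] using this
  have hh : h < p := by
    have := h0lt.2
    rwa [pnorm_parikh, hu0] at this
  -- lengths
  have hflat : us.flatten.length = us.length * p := by
    rw [List.length_flatten]
    rw [List.sum_eq_card_nsmul _ p ?_]
    · simp [mul_comm]
    · intro x hx
      simp only [List.mem_map] at hx
      obtain ⟨u, hu, rfl⟩ := hx
      rw [← pnorm_parikh u, husP u hu]
  have hlen : (substr w b e).length = e + 1 - b := by
    simp only [substr, List.length_take, List.length_drop]
    omega
  have hlen2 : e + 1 - b = h + us.length * p := by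
    rw [← hlen, hsub]
    simp [hknil, hu0, hflat]
  have hk1 : us.length = 1 := by
    by_contra hne
    have h2 : 2 ≤ us.length := by omega
    have := Nat.mul_le_mul_right p h2
    omega
  obtain ⟨u1, rfl⟩ : ∃ u1, us = [u1] := by
    match us, hk1 with
    | [u1], _ => exact ⟨u1, rfl⟩
  have hu1P : parikh u1 = P := husP u1 (by simp)
  have hu1len : u1.length = p := by rw [← pnorm_parikh u1, hu1P]
  have hEe : e + 1 = b + h + p := by
    simp only [List.length_singleton, one_mul] at hlen2
    omega
  have hsub' : substr w b e = u0 ++ u1 := by simpa [hknil] using hsub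
  have hsubstr : substr w b e = (w.drop b).take (h + p) := by
    simp only [substr]
    congr 1
    omega
  have hu0' : u0 = (w.drop b).take h := by
    have : ((u0 ++ u1).take u0.length) = u0 := List.take_left ..
    rw [← this, ← hsub', hsubstr, hu0, List.take_take]
    congr 1
    omega
  have hu1' : u1 = (w.drop (b + h)).take p := by
    have : ((u0 ++ u1).drop u0.length) = u1 := List.drop_left ..
    rw [← this, ← hsub', hsubstr, hu0, List.drop_take, List.drop_drop]
    congr 1
    omega
  refine ⟨hppos, hh, hEe, by rw [← hu1', hu1P], ?_⟩
  intro a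
  rw [← hu0']
  exact h0lt.1 a

theorem leftMaximal_start_mono' {α : Type*} [Fintype α] [DecidableEq α]
    (w : List α) (P : α → ℕ) (b₁ h₁ e₁ b₂ h₂ e₂ : ℕ)
    (hm₁ : IsOcc w P b₁ h₁ 0 e₁ ∧ ∀ b' h' t', b' + 1 = b₁ → ¬ IsOcc w P b' h' t' e₁)
    (hm₂ : IsOcc w P b₂ h₂ 0 e₂ ∧ ∀ b' h' t', b' + 1 = b₂ → ¬ IsOcc w P b' h' t' e₂)
    (he : e₁ < e₂)
    (hb₁ : (b₁ : ℤ) > (e₁ : ℤ) - 2 * (pnorm P : ℤ) + 1)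
    (hb₂ : (b₂ : ℤ) > (e₂ : ℤ) - 2 * (pnorm P : ℤ) + 1) :
    b₁ ≤ b₂ := by
  by_contra hlt
  push_neg at hlt
  set p := pnorm P with hp
  obtain ⟨hocc₁, hmax₁⟩ := hm₁
  obtain ⟨hocc₂, _⟩ := hm₂
  have hshort₁ : e₁ + 1 < b₁ + 2 * p := by omega
  have hshort₂ : e₂ + 1 < b₂ + 2 * p := by omega
  obtain ⟨hppos, hh₁, hE₁, hu1P, hcnt₁⟩ := occ_short hocc₁ hshort₁
  obtain ⟨-, hh₂, hE₂, -, hcnt₂⟩ := occ_short hocc₂ hshort₂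
  have hb1pos : 1 ≤ b₁ := by omega
  have he1w : e₁ < w.length := hocc₁.2.1
  set u1 := (w.drop (b₁ + h₁)).take p with hu1
  set v := (w.drop (b₁ - 1)).take (h₁ + 1) with hv
  -- v is an infix of the head of occurrence 2
  have hvinfix : v <:+: (w.drop b₂).take h₂ := by
    have heq : v = (((w.drop b₂).take h₂).drop (b₁ - 1 - b₂)).take (h₁ + 1) := by
      rw [List.drop_take, List.drop_drop, List.take_take]
      have h1 : b₂ + (b₁ - 1 - b₂) = b₁ - 1 := by omega
      have h2 : min (h₁ + 1) (h₂ - (b₁ - 1 - b₂)) = h₁ + 1 := by omega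
      rw [h1, h2]
    rw [heq]
    exact (List.take_prefix ..).isInfix.trans (List.drop_suffix ..).isInfix
  have hvcnt : ∀ a, v.count a ≤ P a := fun a =>
    (hvinfix.sublist.count_le a).trans (hcnt₂ a)
  have hvlen : v.length = h₁ + 1 := by
    simp only [hv, List.length_take, List.length_drop]
    omega
  have hu1len : u1.length = p := by rw [← pnorm_parikh u1, hu1P]
  have hsubsplit : substr w (b₁ - 1) e₁ = v ++ u1 := by
    simp only [substr]
    have h3 : e₁ + 1 - (b₁ - 1) = (h₁ + 1) + p := by omega
    rw [h3, List.take_add, hv, hu1, List.drop_drop]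
    have h4 : b₁ - 1 + (h₁ + 1) = b₁ + h₁ := by omega
    rw [h4]
  have hPnil : PLt (parikh ([] : List α)) P := by
    constructor
    · intro a; simp [parikh]
    · simpa [pnorm_parikh] using hppos
  rcases lt_or_eq_of_le (show h₁ + 1 ≤ p by omega) with hcase | hcase
  · -- h₁ + 1 < p : extend the head
    refine hmax₁ (b₁ - 1) (h₁ + 1) 0 (by omega) ?_
    refine ⟨by omega, he1w, v, [], [u1], by simpa using hsubsplit, hvlen, rfl, by simp,
      by simpa using hu1P, ⟨hvcnt, ?_⟩, hPnil⟩
    rw [pnorm_parikh, hvlen]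
    exact hcase
  · -- h₁ + 1 = p : v becomes a full block
    have hvP : parikh v = P := by
      funext a
      have hsum : ∑ a, parikh v a = ∑ a, P a := by
        have : ∑ a, parikh v a = pnorm (parikh v) := rfl
        rw [this, pnorm_parikh, hvlen, hcase, hp]; rfl
      have := (Finset.sum_eq_sum_iff_of_le (fun a _ => hvcnt a)).mp hsum
      exact this a (Finset.mem_univ a)
    refine hmax₁ (b₁ - 1) 0 0 (by omega) ?_
    refine ⟨by omega, he1w, [], [], [v, u1], ?_, rfl, rfl, by simp, ?_, hPnil, hPnil⟩
    · simpa using hsubsplit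
    · intro u hu
      simp only [List.mem_cons, List.not_mem_nil, or_false] at hu
      rcases hu with rfl | rfl
      · exact hvP
      · exact hu1P

/-- Two left-maximal occurrences with empty tail and the same abelian period `P`,
each of length less than twice the period, satisfy: the one ending earlier starts earlier. -/
theorem leftMaximal_start_mono {α : Type*} [Fintype α] [DecidableEq α]
    (w : List α) (P : α → ℕ) (b₁ h₁ e₁ b₂ h₂ e₂ : ℕ)
    (hm₁ : LeftMaximal w P b₁ h₁ 0 e₁) (hm₂ : LeftMaximal w P b₂ h₂ 0 e₂)
    (he : e₁ < e₂)
    (hb₁ : (b₁ : ℤ) > (e₁ : ℤ) - 2 * (pnorm P : ℤ) + 1)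
    (hb₂ : (b₂ : ℤ) > (e₂ : ℤ) - 2 * (pnorm P : ℤ) + 1) :
    b₁ ≤ b₂ := leftMaximal_start_mono' w P b₁ h₁ e₁ b₂ h₂ e₂ hm₁ hm₂ he hb₁ hb₂
end

section
/- Let w be a word of length n and 𝒫 a Parikh vector of norm p = |𝒫|. Suppose (b,h,t,e) is an occurrence with abelian period 𝒫 in w and e + 1 ≤ n − 1. If 𝒫_{w[e−t+1..e+1]} ⊆ 𝒫, then (b, h, (t+1) mod p, e+1) is an occurrence with abelian period 𝒫 in w (the occurrence extends one position to the right, the tail growing by one letter, or rolling over into a new full block when t + 1 = p). -/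
namespace PLe

variable {α : Type*} [Fintype α] {P Q : α → ℕ}

lemma pnorm_le (h : PLe P Q) : pnorm P ≤ pnorm Q :=
  Finset.sum_le_sum fun a _ => h a

lemma eq_of_pnorm_eq (h : PLe P Q) (hn : pnorm P = pnorm Q) : P = Q :=
  funext fun a => (Finset.sum_eq_sum_iff_of_le fun i _ => h i).mp hn a (Finset.mem_univ a)

end PLe

lemma substr_succ_right {α : Type*} (w : List α) {i j : ℕ} (hij : i ≤ j + 1) :
    substr w i (j + 1) = substr w i j ++ w[j + 1]?.toList := by
  rw [substr, substr, show j + 1 + 1 - i = j + 1 - i + 1 by omega, List.take_add_one,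
    List.getElem?_drop, Nat.add_sub_cancel' hij]

lemma substr_eq_of_eq_append {α : Type*} {w x y : List α} {b e : ℕ}
    (hw : substr w b e = x ++ y) (hbe : b ≤ e) (he : e < w.length) :
    substr w (e + 1 - y.length) e = y := by
  have hlen := congrArg List.length hw
  simp only [substr, List.length_take, List.length_drop, List.length_append] at hlen
  have hy := congrArg (List.drop x.length) hw
  rw [List.drop_left, substr, List.drop_take, List.drop_drop,
    show e + 1 - b - x.length = y.length by omega,
    show b + x.length = e + 1 - y.length by omega] at hy
  rwa [substr, show e + 1 - (e + 1 - y.length) = y.length by omega]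

/-- A tail of norm `pnorm P` becomes one more block, leaving an empty tail. -/
lemma isOcc_of_PLe_tail {α : Type*} [Fintype α] [DecidableEq α] {w u₀ v : List α}
    {us : List (List α)} {P : α → ℕ} {b e : ℕ} (hbe : b ≤ e) (he : e < w.length)
    (hw : substr w b e = u₀ ++ us.flatten ++ v) (hus : 1 ≤ us.length)
    (husP : ∀ u ∈ us, parikh u = P) (hu₀ : PLt (parikh u₀) P) (hv : PLe (parikh v) P) :
    IsOcc w P b u₀.length (v.length % pnorm P) e := by
  have hvlen : v.length ≤ pnorm P := pnorm_parikh v ▸ hv.pnorm_le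
  rcases hvlen.lt_or_eq with hlt | heq
  · rw [Nat.mod_eq_of_lt hlt]
    exact ⟨hbe, he, u₀, v, us, hw, rfl, rfl, hus, husP, hu₀, hv, by rwa [pnorm_parikh]⟩
  · have hvP : parikh v = P := hv.eq_of_pnorm_eq (by rw [pnorm_parikh, heq])
    have hP : 0 < pnorm P := (Nat.zero_le _).trans_lt hu₀.2
    rw [heq, Nat.mod_self]
    refine ⟨hbe, he, u₀, [], us ++ [v], by simpa using hw, rfl, rfl, by simp, ?_, hu₀,
      fun _ => Nat.zero_le _, by rwa [pnorm_parikh]⟩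
    rintro u hu
    rcases List.mem_append.mp hu with hu | hu
    · exact husP u hu
    · rwa [List.mem_singleton.mp hu]

/-- An occurrence with abelian period `P` extends one position to the right whenever the
Parikh vector of the extended tail is contained in `P`. -/
theorem occ_extend_right {α : Type*} [Fintype α] [DecidableEq α]
    (w : List α) (P : α → ℕ) (b h t e : ℕ)
    (hocc : IsOcc w P b h t e)
    (he : e + 1 ≤ w.length - 1)
    (hext : PLe (parikh (substr w (e + 1 - t) (e + 1))) P) :
    IsOcc w P b h ((t + 1) % pnorm P) (e + 1) := by
  obtain ⟨hbe, he', u₀, uk, us, hw, rfl, rfl, hus, husP, hu₀, -⟩ := hocc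
  have hlen : e + 1 < w.length := by omega
  have hnext : w[e + 1]?.toList = [w[e + 1]] := by simp [hlen]
  have hwin : substr w b (e + 1) = u₀ ++ us.flatten ++ (uk ++ [w[e + 1]]) := by
    rw [substr_succ_right w (by omega), hw, hnext, List.append_assoc]
  have htail : substr w (e + 1 - uk.length) (e + 1) = uk ++ [w[e + 1]] := by
    rw [substr_succ_right w (by omega), substr_eq_of_eq_append hw hbe he', hnext]
  simpa using isOcc_of_PLe_tail (by omega) hlen hwin hus husP hu₀ (htail ▸ hext)
end
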